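/- arXiv:2311.14813 — 3 statements merged into one kernel-verified Lean document; each statement's English description precedes it below -/
import Mathlib

section
/- Let V = (v_1,…,v_n)' be a random vector whose components are independent real random variables with E(v_i) = 0, Var(v_i) = σ_i², and finite fourth moments, and let Σ = Diag(σ_1²,…,σ_n²). Then for any n×n real constant matrices A and B with diagonal entries a_{ii}, b_{ii}, E((V' A V)·(V' B V)) = Σ_{i=1}^n a_{ii} b_{ii} (E(v_i⁴) − 3σ_i⁴) + tr(ΣA)·tr(ΣB) + tr(ΣAΣB^s), where B^s = B + B'. -/
open Matrix MeasureTheory ProbabilityTheory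


lemma my_integral_prod_indep {Ω : Type*} [MeasurableSpace Ω] (μ : Measure Ω)
    [IsProbabilityMeasure μ] {ι : Type*} (g : ι → Ω → ℝ)
    (hmeas : ∀ i, Measurable (g i))
    (hindep : iIndepFun g μ)
    (hint : ∀ i, Integrable (g i) μ) (s : Finset ι) :
    Integrable (fun ω => ∏ i ∈ s, g i ω) μ ∧
      (∫ ω, ∏ i ∈ s, g i ω ∂μ = ∏ i ∈ s, ∫ ω, g i ω ∂μ) := by
  classical
  induction s using Finset.induction with
  | empty => simp
  | @insert i s hi ih =>
    have hIF : IndepFun (∏ j ∈ s, g j) (g i) μ :=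
      hindep.indepFun_finsetProd_of_notMem hmeas hi
    have hps : (∏ j ∈ s, g j) = fun ω => ∏ j ∈ s, g j ω := by
      funext ω; simp
    have hintp : Integrable ((∏ j ∈ s, g j) * g i) μ := by
      exact hIF.integrable_mul (hps ▸ ih.1) (hint i)
    have heq : (fun ω => ∏ j ∈ insert i s, g j ω) = (∏ j ∈ s, g j) * g i := by
      funext ω
      simp [Finset.prod_insert hi, mul_comm]
    constructor
    · rw [heq]; exact hintp
    · calc ∫ ω, ∏ j ∈ insert i s, g j ω ∂μ
          = ∫ ω, ((∏ j ∈ s, g j) * g i) ω ∂μ := by rw [← heq]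
        _ = (∫ ω, (∏ j ∈ s, g j) ω ∂μ) * ∫ ω, g i ω ∂μ :=
            hIF.integral_mul_eq_mul_integral (hps ▸ ih.1).aestronglyMeasurable (hint i).aestronglyMeasurable
        _ = ∏ j ∈ insert i s, ∫ ω, g j ω ∂μ := by
            rw [Finset.prod_insert hi, hps, ih.2, mul_comm]


lemma my_integrable_pow {Ω : Type*} [MeasurableSpace Ω] (μ : Measure Ω)
    [IsProbabilityMeasure μ] (f : Ω → ℝ) (hm : Measurable f) (hf : MemLp f 4 μ)
    {k : ℕ} (hk : k ≤ 4) : Integrable (fun ω => (f ω) ^ k) μ := by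
  have h4 : Integrable (fun ω => ‖f ω‖ ^ (4 : ℕ)) μ := by
    have := hf.integrable_norm_rpow (by norm_num) (by norm_num)
    refine this.congr ?_
    filter_upwards with ω
    rw [show ((4 : ENNReal).toReal) = ((4 : ℕ) : ℝ) by norm_num, Real.rpow_natCast]
  have h4' : Integrable (fun ω => (f ω) ^ 4) μ := by
    refine h4.congr ?_
    filter_upwards with ω
    rw [Real.norm_eq_abs, ← abs_pow, abs_of_nonneg (by positivity)]
  refine Integrable.mono' ((integrable_const (1:ℝ)).add h4') ((hm.pow_const k).aestronglyMeasurable) ?_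
  filter_upwards with ω
  simp only [Pi.add_apply, Real.norm_eq_abs, abs_pow]
  rcases le_total (|f ω|) 1 with h | h
  · have h1 : |f ω| ^ k ≤ 1 := pow_le_one₀ (abs_nonneg _) h
    nlinarith [sq_nonneg (f ω ^ 2)]
  · have h1 : |f ω| ^ k ≤ |f ω| ^ 4 := pow_le_pow_right₀ h hk
    have h2 : |f ω| ^ 4 = f ω ^ 4 := by rw [← abs_pow, abs_of_nonneg (by positivity)]
    nlinarith

lemma my_moment4 {n : ℕ} {Ω : Type*} [MeasurableSpace Ω] (μ : Measure Ω)
    [IsProbabilityMeasure μ] (V : Fin n → Ω → ℝ) (σ2 : Fin n → ℝ)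
    (hmeas : ∀ i, Measurable (V i))
    (hindep : iIndepFun V μ)
    (hmean : ∀ i, ∫ ω, V i ω ∂μ = 0)
    (hL4 : ∀ i, MemLp (V i) 4 μ)
    (hvar : ∀ i, ∫ ω, (V i ω) ^ 2 ∂μ = σ2 i)
    (i j k l : Fin n) :
    Integrable (fun ω => V i ω * V j ω * V k ω * V l ω) μ ∧
    ∫ ω, V i ω * V j ω * V k ω * V l ω ∂μ
      = (if i = j ∧ i = k ∧ i = l then (∫ ω, (V i ω) ^ 4 ∂μ) - 3 * (σ2 i) ^ 2 else 0)
        + (if i = j then σ2 i else 0) * (if k = l then σ2 k else 0)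
        + (if i = k then σ2 i else 0) * (if j = l then σ2 j else 0)
        + (if i = l then σ2 i else 0) * (if j = k then σ2 j else 0) := by
  classical
  set e : Fin n → ℕ := fun m =>
    (if m = i then 1 else 0) + (if m = j then 1 else 0)
      + (if m = k then 1 else 0) + (if m = l then 1 else 0) with he
  have he_le : ∀ m, e m ≤ 4 := by
    intro m; simp only [he]; split_ifs <;> norm_num
  have hg_meas : ∀ m, Measurable (fun ω => (V m ω) ^ e m) :=
    fun m => (hmeas m).pow_const _
  have hg_indep : iIndepFun (fun m ω => (V m ω) ^ e m) μ :=
    hindep.comp (fun m x => x ^ e m) (fun m => measurable_id.pow_const _)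
  have hg_int : ∀ m, Integrable (fun ω => (V m ω) ^ e m) μ :=
    fun m => my_integrable_pow μ _ (hmeas m) (hL4 m) (he_le m)
  obtain ⟨hint, hprod⟩ := my_integral_prod_indep μ _ hg_meas hg_indep hg_int Finset.univ
  have hsingle : ∀ ω, ∀ t : Fin n, ∏ m, (V m ω) ^ (if m = t then 1 else 0) = V t ω := by
    intro ω t
    simp [pow_ite, Finset.prod_ite_eq']
  have hpt : ∀ ω, V i ω * V j ω * V k ω * V l ω = ∏ m, (V m ω) ^ e m := by
    intro ω
    simp only [he, pow_add, Finset.prod_mul_distrib, hsingle ω]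
  have hint' : Integrable (fun ω => V i ω * V j ω * V k ω * V l ω) μ := by
    refine hint.congr ?_
    filter_upwards with ω using (hpt ω).symm
  refine ⟨hint', ?_⟩
  have hL : ∫ ω, V i ω * V j ω * V k ω * V l ω ∂μ = ∏ m, ∫ ω, (V m ω) ^ e m ∂μ := by
    rw [← hprod]
    exact integral_congr_ae (Filter.Eventually.of_forall hpt)
  rw [hL]
  -- helper facts
  have hzero : ∀ m : Fin n, e m = 1 → (∏ m, ∫ ω, (V m ω) ^ e m ∂μ) = 0 := by
    intro m hm
    refine Finset.prod_eq_zero (Finset.mem_univ m) ?_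
    rw [hm]; simpa using hmean m
  have hone : ∀ m : Fin n, e m = 0 → (∫ ω, (V m ω) ^ e m ∂μ) = 1 := by
    intro m hm; rw [hm]; simp
  have hpair : ∀ a b : Fin n, a ≠ b → e a = 2 → e b = 2 → (∀ m, m ≠ a → m ≠ b → e m = 0) →
      (∏ m, ∫ ω, (V m ω) ^ e m ∂μ) = σ2 a * σ2 b := by
    intro a b hab ha hb hrest
    rw [show (Finset.univ : Finset (Fin n)) = insert a (insert b (Finset.univ \ {a, b})) by
      ext m; by_cases h1 : m = a <;> by_cases h2 : m = b <;> simp [h1, h2]]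
    rw [Finset.prod_insert (by simp [hab]), Finset.prod_insert (by simp)]
    rw [Finset.prod_eq_one (fun m hm => by
      simp only [Finset.mem_sdiff, Finset.mem_insert, Finset.mem_singleton] at hm
      exact hone m (hrest m (fun h => hm.2 (Or.inl h)) (fun h => hm.2 (Or.inr h))))]
    rw [ha, hb, hvar a, hvar b, mul_one]
  by_cases hij : i = j
  · by_cases hkl : k = l
    · by_cases hik : i = k
      · subst hij; subst hik; subst hkl
        have h4 : e i = 4 := by simp [he]
        rw [Finset.prod_eq_single i (fun m _ hm => hone m (by simp [he, hm])) (by simp)]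
        rw [h4]
        simp; ring
      · subst hij; subst hkl
        rw [hpair i k hik (by simp [he, hik]) (by simp [he, Ne.symm hik])
          (fun m hm1 hm2 => by simp [he, hm1, hm2])]
        simp [hik, Ne.symm hik]
    · by_cases hik : i = k
      · subst hij; subst hik
        have hil : i ≠ l := hkl
        rw [hzero l (by simp [he, Ne.symm hil])]
        simp [hil, hkl]
      · by_cases hil : i = l
        · subst hij; subst hil
          rw [hzero k (by simp [he, Ne.symm hik, hkl])]
          simp [hik, hkl, Ne.symm hik]
        · subst hij
          rw [hzero k (by simp [he, Ne.symm hik, hkl])]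
          simp [hik, hil, hkl]
  · by_cases hkl : k = l
    · subst hkl
      by_cases hik : i = k
      · subst hik
        rw [hzero j (by simp [he, Ne.symm hij])]
        simp [hij, Ne.symm hij]
      · by_cases hjk : j = k
        · subst hjk
          rw [hzero i (by simp [he, hij, hik])]
          simp [hij, hik, Ne.symm hik]
        · rw [hzero i (by simp [he, hij, hik])]
          simp [hij, hik, hjk]
    · by_cases hik : i = k
      · subst hik
        by_cases hjl : j = l
        · subst hjl
          rw [hpair i j hij (by simp [he, hij, hkl]) (by simp [he, Ne.symm hij, Ne.symm hkl])
            (fun m hm1 hm2 => by simp [he, hm1, hm2])]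
          simp [hij, hkl, Ne.symm hkl]
        · rw [hzero j (by simp [he, Ne.symm hij, hjl])]
          simp [hij, hkl, hjl]
      · by_cases hil : i = l
        · subst hil
          by_cases hjk : j = k
          · subst hjk
            rw [hpair i j hij (by simp [he, hij, Ne.symm hkl]) (by simp [he, Ne.symm hij, hkl])
              (fun m hm1 hm2 => by simp [he, hm1, hm2])]
            simp [hij, hik, hkl, Ne.symm hij, Ne.symm hkl]
          · rw [hzero j (by simp [he, Ne.symm hij, hjk, hkl])]
            simp [hij, hik, hjk, hkl, Ne.symm hkl]
        · rw [hzero i (by simp [he, hij, hik, hil])]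
          simp [hij, hik, hil, hkl]

/-- **Lemma 2 (heteroskedastic case, part c).** If the components of `V` are independent,
mean zero, with variances `σ²ᵢ` and finite fourth moments, then for any constant matrices
`A` and `B`,
`E((V'AV)(V'BV)) = Σᵢ aᵢᵢ bᵢᵢ (E(vᵢ⁴) − 3σᵢ⁴) + tr(ΣA)tr(ΣB) + tr(ΣAΣBˢ)`,
where `Σ = Diag(σ₁²,…,σₙ²)` and `Bˢ = B + B'`. -/
theorem expectation_product_quadratic_forms_heteroskedastic {n : ℕ}
    {Ω : Type*} [MeasurableSpace Ω] (μ : Measure Ω) [IsProbabilityMeasure μ]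
    (V : Fin n → Ω → ℝ) (σ2 : Fin n → ℝ)
    (hmeas : ∀ i, Measurable (V i))
    (hindep : iIndepFun V μ)
    (hmean : ∀ i, ∫ ω, V i ω ∂μ = 0)
    (hL4 : ∀ i, MemLp (V i) 4 μ)
    (hvar : ∀ i, ∫ ω, (V i ω) ^ 2 ∂μ = σ2 i)
    (A B : Matrix (Fin n) (Fin n) ℝ) :
    ∫ ω, ((fun i => V i ω) ⬝ᵥ A.mulVec (fun i => V i ω))
        * ((fun i => V i ω) ⬝ᵥ B.mulVec (fun i => V i ω)) ∂μ
      = (∑ i, A i i * B i i * ((∫ ω, (V i ω) ^ 4 ∂μ) - 3 * (σ2 i) ^ 2))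
        + (Matrix.diagonal σ2 * A).trace * (Matrix.diagonal σ2 * B).trace
        + (Matrix.diagonal σ2 * A * Matrix.diagonal σ2 * (B + Bᵀ)).trace := by
  classical
  have key := my_moment4 μ V σ2 hmeas hindep hmean hL4 hvar
  have hexp : ∀ ω, ((fun i => V i ω) ⬝ᵥ A.mulVec (fun i => V i ω))
        * ((fun i => V i ω) ⬝ᵥ B.mulVec (fun i => V i ω))
      = ∑ p : (Fin n × Fin n) × (Fin n × Fin n),
          A p.1.1 p.1.2 * B p.2.1 p.2.2 *
            (V p.1.1 ω * V p.1.2 ω * V p.2.1 ω * V p.2.2 ω) := by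
    intro ω
    have hquad : ∀ (M : Matrix (Fin n) (Fin n) ℝ),
        ((fun i => V i ω) ⬝ᵥ M.mulVec (fun i => V i ω))
          = ∑ q : Fin n × Fin n, M q.1 q.2 * (V q.1 ω * V q.2 ω) := by
      intro M
      simp only [dotProduct, Matrix.mulVec, Fintype.sum_prod_type, Finset.mul_sum]
      refine Finset.sum_congr rfl fun i _ => Finset.sum_congr rfl fun j _ => ?_
      ring
    rw [hquad A, hquad B, Finset.sum_mul_sum]
    simp only [Fintype.sum_prod_type]
    refine Finset.sum_congr rfl fun q1 _ => Finset.sum_congr rfl fun q2 _ =>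
      Finset.sum_congr rfl fun q3 _ => Finset.sum_congr rfl fun q4 _ => ?_
    ring
  have hswap : ∫ ω, ((fun i => V i ω) ⬝ᵥ A.mulVec (fun i => V i ω))
        * ((fun i => V i ω) ⬝ᵥ B.mulVec (fun i => V i ω)) ∂μ
      = ∑ p : (Fin n × Fin n) × (Fin n × Fin n),
          A p.1.1 p.1.2 * B p.2.1 p.2.2 *
            ∫ ω, V p.1.1 ω * V p.1.2 ω * V p.2.1 ω * V p.2.2 ω ∂μ := by
    rw [integral_congr_ae (Filter.Eventually.of_forall hexp),
      integral_finset_sum _ (fun p _ => ((key p.1.1 p.1.2 p.2.1 p.2.2).1.const_mul _))]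
    exact Finset.sum_congr rfl fun p _ => integral_const_mul _ _
  rw [hswap]
  have hval : ∀ p : (Fin n × Fin n) × (Fin n × Fin n),
      A p.1.1 p.1.2 * B p.2.1 p.2.2 *
          ∫ ω, V p.1.1 ω * V p.1.2 ω * V p.2.1 ω * V p.2.2 ω ∂μ
        = A p.1.1 p.1.2 * B p.2.1 p.2.2 *
          ((if p.1.1 = p.1.2 ∧ p.1.1 = p.2.1 ∧ p.1.1 = p.2.2 then
              (∫ ω, (V p.1.1 ω) ^ 4 ∂μ) - 3 * (σ2 p.1.1) ^ 2 else 0)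
            + (if p.1.1 = p.1.2 then σ2 p.1.1 else 0) * (if p.2.1 = p.2.2 then σ2 p.2.1 else 0)
            + (if p.1.1 = p.2.1 then σ2 p.1.1 else 0) * (if p.1.2 = p.2.2 then σ2 p.1.2 else 0)
            + (if p.1.1 = p.2.2 then σ2 p.1.1 else 0) * (if p.1.2 = p.2.1 then σ2 p.1.2 else 0)) := by
    intro p
    rw [(key p.1.1 p.1.2 p.2.1 p.2.2).2]
  rw [Finset.sum_congr rfl fun p _ => hval p]
  simp only [Fintype.sum_prod_type, mul_add, Finset.sum_add_distrib, mul_ite, ite_mul,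
    mul_zero, zero_mul, ite_and, Finset.sum_ite_eq, Finset.sum_ite_eq', Finset.mem_univ,
    if_true, Matrix.trace, Matrix.diag, Matrix.mul_apply, Matrix.diagonal_apply,
    Finset.sum_ite_irrel, Finset.sum_const_zero, Matrix.add_apply, Matrix.transpose_apply,
    Finset.sum_mul_sum]
  have h2 : ∑ x : Fin n, ∑ x_1 : Fin n, A x x * B x_1 x_1 * (σ2 x * σ2 x_1)
      = ∑ i : Fin n, ∑ j : Fin n, σ2 i * A i i * (σ2 j * B j j) :=
    Finset.sum_congr rfl fun i _ => Finset.sum_congr rfl fun j _ => by ring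
  have h3 : ∑ x : Fin n, ∑ x_1 : Fin n, A x x_1 * B x x_1 * (σ2 x * σ2 x_1)
      = ∑ x : Fin n, ∑ x_1 : Fin n, σ2 x * A x x_1 * σ2 x_1 * B x x_1 :=
    Finset.sum_congr rfl fun i _ => Finset.sum_congr rfl fun j _ => by ring
  have h4 : ∑ x : Fin n, ∑ x_1 : Fin n, A x x_1 * B x_1 x * (σ2 x * σ2 x_1)
      = ∑ x : Fin n, ∑ x_1 : Fin n, σ2 x * A x x_1 * σ2 x_1 * B x_1 x :=
    Finset.sum_congr rfl fun i _ => Finset.sum_congr rfl fun j _ => by ring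
  rw [h2, h3, h4]
  ring
end

section
/- Let W, M be n×n real matrices with W M = M W and with all diagonal entries of W equal to zero; let λ₀, ρ₀ be real scalars, X an n×k real matrix, β₀ ∈ ℝ^k, and let V be a random vector with independent mean-zero components with finite variances and diagonal covariance matrix Σ. Define Y = exp(-λ₀W)(Xβ₀ + exp(-ρ₀M)V). Then E(Y' exp(λ₀W') W' exp(ρ₀M') V) = 0. -/
open Matrix MeasureTheory ProbabilityTheory NormedSpace

private lemma mulVec_dot_aux {n : ℕ} (B : Matrix (Fin n) (Fin n) ℝ) (u w : Fin n → ℝ) :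
    B.mulVec u ⬝ᵥ w = u ⬝ᵥ Bᵀ.mulVec w := by
  rw [dotProduct_comm, dotProduct_mulVec, ← Matrix.mulVec_transpose, dotProduct_comm]

private lemma exp_neg_mul_exp_aux {n : ℕ} (A : Matrix (Fin n) (Fin n) ℝ) (t : ℝ) :
    exp ((-t) • A) * exp (t • A) = 1 := by
  have h := (Matrix.exp_add_of_commute ((-t) • A) (t • A)
    (((Commute.refl A).smul_left (-t)).smul_right t)).symm
  rw [← add_smul, neg_add_cancel, zero_smul, NormedSpace.exp_zero] at h
  exact h

/-- **Zero-mean λ-score under commutativity.** In the MESS(1,1) model with heteroskedastic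
disturbances, if `W M = M W` and `W` has zero diagonal, then the λ-score of the
quasi log-likelihood has zero expectation at the true parameters, where
`Y = exp(-λ₀W)(Xβ₀ + exp(-ρ₀M)V)`. -/
theorem expectation_lambda_score_zero_of_commute {n k : ℕ}
    {Ω : Type*} [MeasurableSpace Ω] (μ : Measure Ω) [IsProbabilityMeasure μ]
    (W M : Matrix (Fin n) (Fin n) ℝ)
    (hcomm : W * M = M * W) (hdiag : ∀ i, W i i = 0)
    (lam0 rho0 : ℝ)
    (X : Matrix (Fin n) (Fin k) ℝ) (beta0 : Fin k → ℝ)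
    (V : Fin n → Ω → ℝ) (σ2 : Fin n → ℝ)
    (hmeas : ∀ i, Measurable (V i))
    (hindep : iIndepFun V μ)
    (hmean : ∀ i, ∫ ω, V i ω ∂μ = 0)
    (hL2 : ∀ i, MemLp (V i) 2 μ)
    (hvar : ∀ i, ∫ ω, (V i ω) ^ 2 ∂μ = σ2 i)
    (Y : Ω → Fin n → ℝ)
    (hY : ∀ ω, Y ω = (exp ((-lam0) • W)).mulVec
        (X.mulVec beta0 + (exp ((-rho0) • M)).mulVec (fun i => V i ω))) :
    ∫ ω, Y ω ⬝ᵥ (exp (lam0 • Wᵀ) * Wᵀ * exp (rho0 • Mᵀ)).mulVec (fun i => V i ω) ∂μ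
      = 0 := by
  classical
  set a : Fin n → ℝ := X.mulVec beta0 with ha
  set C : Matrix (Fin n) (Fin n) ℝ := Wᵀ * exp (rho0 • Mᵀ) with hC
  -- transposed commutation
  have hT : Commute Wᵀ Mᵀ := by
    unfold Commute SemiconjBy
    rw [← Matrix.transpose_mul, ← Matrix.transpose_mul, hcomm]
  -- pointwise identity for the score
  have key : ∀ ω, Y ω ⬝ᵥ (exp (lam0 • Wᵀ) * Wᵀ * exp (rho0 • Mᵀ)).mulVec (fun i => V i ω)
      = a ⬝ᵥ C.mulVec (fun i => V i ω)
        + (fun i => V i ω) ⬝ᵥ Wᵀ.mulVec (fun i => V i ω) := by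
    intro ω
    set v : Fin n → ℝ := fun i => V i ω with hv
    have hE1 : (exp ((-lam0) • W))ᵀ = exp ((-lam0) • Wᵀ) := by
      rw [← Matrix.exp_transpose, Matrix.transpose_smul]
    have hE2 : (exp ((-rho0) • M))ᵀ = exp ((-rho0) • Mᵀ) := by
      rw [← Matrix.exp_transpose, Matrix.transpose_smul]
    have hfirst : exp ((-lam0) • Wᵀ) * (exp (lam0 • Wᵀ) * Wᵀ * exp (rho0 • Mᵀ)) = C := by
      rw [hC, ← mul_assoc, ← mul_assoc, exp_neg_mul_exp_aux, one_mul]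
    have hsecond : exp ((-rho0) • Mᵀ) * C = Wᵀ := by
      have hWE : Commute Wᵀ (exp ((-rho0) • Mᵀ)) := (hT.smul_right (-rho0)).exp_right
      rw [hC, ← mul_assoc, ← hWE.eq, mul_assoc, exp_neg_mul_exp_aux, mul_one]
    calc Y ω ⬝ᵥ (exp (lam0 • Wᵀ) * Wᵀ * exp (rho0 • Mᵀ)).mulVec v
        = (a + (exp ((-rho0) • M)).mulVec v) ⬝ᵥ
            (exp ((-lam0) • W))ᵀ.mulVec
              ((exp (lam0 • Wᵀ) * Wᵀ * exp (rho0 • Mᵀ)).mulVec v) := by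
          rw [hY ω, mulVec_dot_aux]
      _ = (a + (exp ((-rho0) • M)).mulVec v) ⬝ᵥ C.mulVec v := by
          rw [hE1, Matrix.mulVec_mulVec, hfirst]
      _ = a ⬝ᵥ C.mulVec v + (exp ((-rho0) • M)).mulVec v ⬝ᵥ C.mulVec v := by
          rw [add_dotProduct]
      _ = a ⬝ᵥ C.mulVec v + v ⬝ᵥ Wᵀ.mulVec v := by
          rw [mulVec_dot_aux, hE2, Matrix.mulVec_mulVec, hsecond]
  -- integrability facts
  have hInt1 : ∀ j, Integrable (V j) μ := fun j => (hL2 j).integrable one_le_two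
  have hInt2 : ∀ i j, Integrable (fun ω => V i ω * V j ω) μ := by
    intro i j
    have h : MemLp (V i • V j) 1 μ :=
      by
        haveI : ENNReal.HolderTriple 2 2 1 := ⟨by rw [ENNReal.inv_two_add_inv_two, inv_one]⟩
        exact (hL2 j).smul (hL2 i)
    exact memLp_one_iff_integrable.mp h
  -- the linear part has zero expectation
  have h1 : ∫ ω, a ⬝ᵥ C.mulVec (fun i => V i ω) ∂μ = 0 := by
    have e1 : (fun ω => a ⬝ᵥ C.mulVec (fun i => V i ω))
        = fun ω => ∑ i, ∑ j, (a i * C i j) * V j ω := by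
      funext ω
      simp [dotProduct, Matrix.mulVec, Finset.mul_sum, mul_assoc]
    rw [e1, integral_finset_sum _ (fun i _ =>
      integrable_finset_sum _ (fun j _ => (hInt1 j).const_mul _))]
    have : ∀ i : Fin n, ∫ ω, ∑ j, (a i * C i j) * V j ω ∂μ = 0 := by
      intro i
      rw [integral_finset_sum _ (fun j _ => (hInt1 j).const_mul _)]
      refine Finset.sum_eq_zero fun j _ => ?_
      rw [integral_const_mul, hmean j, mul_zero]
    simp [this]
  -- the quadratic part has zero expectation
  have h2 : ∫ ω, (fun i => V i ω) ⬝ᵥ Wᵀ.mulVec (fun i => V i ω) ∂μ = 0 := by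
    have e2 : (fun ω => (fun i => V i ω) ⬝ᵥ Wᵀ.mulVec (fun i => V i ω))
        = fun ω => ∑ i, ∑ j, W j i * (V i ω * V j ω) := by
      funext ω
      simp only [dotProduct, Matrix.mulVec, Matrix.transpose_apply, Finset.mul_sum]
      exact Finset.sum_congr rfl fun i _ => Finset.sum_congr rfl fun j _ => by ring
    rw [e2, integral_finset_sum _ (fun i _ =>
      integrable_finset_sum _ (fun j _ => (hInt2 i j).const_mul _))]
    refine Finset.sum_eq_zero fun i _ => ?_
    rw [integral_finset_sum _ (fun j _ => (hInt2 i j).const_mul _)]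
    refine Finset.sum_eq_zero fun j _ => ?_
    rw [integral_const_mul]
    rcases eq_or_ne i j with rfl | hij
    · rw [hdiag i, zero_mul]
    · have hind : IndepFun (V i) (V j) μ := hindep.indepFun hij
      have : ∫ ω, V i ω * V j ω ∂μ = (∫ ω, V i ω ∂μ) * ∫ ω, V j ω ∂μ :=
        hind.integral_fun_mul_eq_mul_integral (hmeas i).aestronglyMeasurable (hmeas j).aestronglyMeasurable
      rw [this, hmean i, zero_mul, mul_zero]
  -- combine
  calc ∫ ω, Y ω ⬝ᵥ (exp (lam0 • Wᵀ) * Wᵀ * exp (rho0 • Mᵀ)).mulVec (fun i => V i ω) ∂μ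
      = ∫ ω, (a ⬝ᵥ C.mulVec (fun i => V i ω)
          + (fun i => V i ω) ⬝ᵥ Wᵀ.mulVec (fun i => V i ω)) ∂μ :=
        integral_congr_ae (Filter.Eventually.of_forall key)
    _ = (∫ ω, a ⬝ᵥ C.mulVec (fun i => V i ω) ∂μ)
          + ∫ ω, (fun i => V i ω) ⬝ᵥ Wᵀ.mulVec (fun i => V i ω) ∂μ := by
        refine integral_add ?_ ?_
        · have e1 : (fun ω => a ⬝ᵥ C.mulVec (fun i => V i ω))
              = fun ω => ∑ i, ∑ j, (a i * C i j) * V j ω := by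
            funext ω
            simp [dotProduct, Matrix.mulVec, Finset.mul_sum, mul_assoc]
          rw [e1]
          exact integrable_finset_sum _ (fun i _ =>
            integrable_finset_sum _ (fun j _ => (hInt1 j).const_mul _))
        · have e2 : (fun ω => (fun i => V i ω) ⬝ᵥ Wᵀ.mulVec (fun i => V i ω))
              = fun ω => ∑ i, ∑ j, W j i * (V i ω * V j ω) := by
            funext ω
            simp only [dotProduct, Matrix.mulVec, Matrix.transpose_apply, Finset.mul_sum]
            exact Finset.sum_congr rfl fun i _ => Finset.sum_congr rfl fun j _ => by ring
          rw [e2]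
          exact integrable_finset_sum _ (fun i _ =>
            integrable_finset_sum _ (fun j _ => (hInt2 i j).const_mul _))
    _ = 0 := by rw [h1, h2, add_zero]
end

section
/- Let W, M be n×n real matrices, λ₀, ρ₀ real scalars, X an n×k real matrix, β₀ ∈ ℝ^k, and let V be a random vector with independent mean-zero components with finite variances. Define Y = exp(-λ₀W)(Xβ₀ + exp(-ρ₀M)V), 𝕎 = exp(ρ₀M) W exp(-ρ₀M), and 𝕎_D = 𝕎 − Diag(𝕎), where Diag(𝕎) is the diagonal matrix formed by the diagonal entries of 𝕎. Then E(Y' exp(λ₀W') exp(ρ₀M') 𝕎_D V) = 0. -/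
open Matrix MeasureTheory ProbabilityTheory NormedSpace

/-- **Zero mean of the adjusted λ-score.** In the MESS(1,1) model with heteroskedastic
disturbances, the adjusted λ-score of the M-estimation approach has zero expectation at the
true parameters: `E(Y' exp(λ₀W') exp(ρ₀M') 𝕎_D V) = 0`, where
`Y = exp(-λ₀W)(Xβ₀ + exp(-ρ₀M)V)`, `𝕎 = exp(ρ₀M) W exp(-ρ₀M)` and
`𝕎_D = 𝕎 − Diag(𝕎)`. -/
theorem expectation_adjusted_lambda_score_zero {n k : ℕ}
    {Ω : Type*} [MeasurableSpace Ω] (μ : Measure Ω) [IsProbabilityMeasure μ]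
    (W M : Matrix (Fin n) (Fin n) ℝ) (lam0 rho0 : ℝ)
    (X : Matrix (Fin n) (Fin k) ℝ) (beta0 : Fin k → ℝ)
    (V : Fin n → Ω → ℝ)
    (hmeas : ∀ i, Measurable (V i))
    (hindep : iIndepFun V μ)
    (hmean : ∀ i, ∫ ω, V i ω ∂μ = 0)
    (hL2 : ∀ i, MemLp (V i) 2 μ)
    (Y : Ω → Fin n → ℝ)
    (hY : ∀ ω, Y ω = (NormedSpace.exp ((-lam0) • W)).mulVec
        (X.mulVec beta0 + (NormedSpace.exp ((-rho0) • M)).mulVec (fun i => V i ω)))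
    (WW WD : Matrix (Fin n) (Fin n) ℝ)
    (hWW : WW = NormedSpace.exp (rho0 • M) * W * NormedSpace.exp ((-rho0) • M))
    (hWD : WD = WW - Matrix.diagonal (fun i => WW i i)) :
    ∫ ω, Y ω ⬝ᵥ (NormedSpace.exp (lam0 • Wᵀ) * NormedSpace.exp (rho0 • Mᵀ) * WD).mulVec (fun i => V i ω) ∂μ
      = 0 := by
  have hVint : ∀ i, Integrable (V i) μ := fun i => (hL2 i).integrable one_le_two
  have hVmul : ∀ i j, Integrable (fun ω => V i ω * V j ω) μ := by
    intro i j
    rcases eq_or_ne i j with rfl | hij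
    · simpa [sq] using (hL2 i).integrable_sq
    · exact (hindep.indepFun hij).integrable_mul (hVint i) (hVint j)
  -- the diagonal of WD vanishes
  have hdiag : ∀ i, WD i i = 0 := by
    intro i
    simp [hWD, Matrix.sub_apply, Matrix.diagonal_apply_eq]
  -- transpose exponential inverse facts
  have hBT : (NormedSpace.exp ((-lam0) • W))ᵀ * NormedSpace.exp (lam0 • Wᵀ) = 1 := by
    rw [← Matrix.exp_transpose, Matrix.transpose_smul, neg_smul,
      ← Matrix.exp_add_of_commute _ _ ((Commute.refl (lam0 • Wᵀ)).neg_left),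
      neg_add_cancel, NormedSpace.exp_zero]
  have hET : (NormedSpace.exp ((-rho0) • M))ᵀ * NormedSpace.exp (rho0 • Mᵀ) = 1 := by
    rw [← Matrix.exp_transpose, Matrix.transpose_smul, neg_smul,
      ← Matrix.exp_add_of_commute _ _ ((Commute.refl (rho0 • Mᵀ)).neg_left),
      neg_add_cancel, NormedSpace.exp_zero]
  set c : Fin n → ℝ := X.mulVec beta0 with hc
  set A : Matrix (Fin n) (Fin n) ℝ := NormedSpace.exp (rho0 • Mᵀ) * WD with hA
  set d : Fin n → ℝ := Matrix.vecMul c A with hd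
  -- pointwise rewriting of the integrand
  have hpt : ∀ ω, Y ω ⬝ᵥ (NormedSpace.exp (lam0 • Wᵀ) * NormedSpace.exp (rho0 • Mᵀ) * WD).mulVec (fun i => V i ω)
      = ∑ i, (d i * V i ω + ∑ j, WD i j * (V i ω * V j ω)) := by
    intro ω
    set v : Fin n → ℝ := fun i => V i ω with hv
    have h1 : Y ω ⬝ᵥ (NormedSpace.exp (lam0 • Wᵀ) * NormedSpace.exp (rho0 • Mᵀ) * WD).mulVec v
        = ((c + (NormedSpace.exp ((-rho0) • M)).mulVec v) ᵥ*
            ((NormedSpace.exp ((-lam0) • W))ᵀ * (NormedSpace.exp (lam0 • Wᵀ) * NormedSpace.exp (rho0 • Mᵀ) * WD))) ⬝ᵥ v := by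
      rw [hY ω, Matrix.dotProduct_mulVec, ← Matrix.vecMul_transpose, Matrix.vecMul_vecMul]
    have h2 : (NormedSpace.exp ((-lam0) • W))ᵀ * (NormedSpace.exp (lam0 • Wᵀ) * NormedSpace.exp (rho0 • Mᵀ) * WD) = A := by
      rw [hA]
      rw [show NormedSpace.exp (lam0 • Wᵀ) * NormedSpace.exp (rho0 • Mᵀ) * WD
          = NormedSpace.exp (lam0 • Wᵀ) * (NormedSpace.exp (rho0 • Mᵀ) * WD) by rw [mul_assoc],
        ← mul_assoc, hBT, one_mul]
    have h3 : ((NormedSpace.exp ((-rho0) • M)).mulVec v) ᵥ* A = v ᵥ* WD := by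
      rw [← Matrix.vecMul_transpose, Matrix.vecMul_vecMul, hA, ← mul_assoc, hET, one_mul]
    rw [h1, h2, Matrix.add_vecMul, h3, ← hd, add_dotProduct]
    have h4 : (v ᵥ* WD) ⬝ᵥ v = ∑ i, ∑ j, WD i j * (v i * v j) := by
      simp only [Matrix.vecMul, dotProduct, Finset.sum_mul]
      rw [Finset.sum_comm]
      exact Finset.sum_congr rfl fun i _ => Finset.sum_congr rfl fun j _ => by ring
    rw [h4]
    simp only [dotProduct, ← Finset.sum_add_distrib]
    rfl
  calc ∫ ω, Y ω ⬝ᵥ (NormedSpace.exp (lam0 • Wᵀ) * NormedSpace.exp (rho0 • Mᵀ) * WD).mulVec (fun i => V i ω) ∂μ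
      = ∫ ω, ∑ i, (d i * V i ω + ∑ j, WD i j * (V i ω * V j ω)) ∂μ := by
        exact integral_congr_ae (Filter.Eventually.of_forall hpt)
    _ = ∑ i, ∫ ω, (d i * V i ω + ∑ j, WD i j * (V i ω * V j ω)) ∂μ := by
        refine integral_finset_sum _ fun i _ => ?_
        exact ((hVint i).const_mul (d i)).add
          (integrable_finset_sum _ fun j _ => (hVmul i j).const_mul (WD i j))
    _ = 0 := by
        refine Finset.sum_eq_zero fun i _ => ?_
        rw [integral_add ((hVint i).const_mul (d i))
            (integrable_finset_sum _ fun j _ => (hVmul i j).const_mul (WD i j)),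
          integral_const_mul, hmean i, mul_zero, zero_add,
          integral_finset_sum _ fun j _ => (hVmul i j).const_mul (WD i j)]
        refine Finset.sum_eq_zero fun j _ => ?_
        rw [integral_const_mul]
        rcases eq_or_ne i j with rfl | hij
        · rw [hdiag i, zero_mul]
        · have := IndepFun.integral_mul_eq_mul_integral (hindep.indepFun hij) (hVint i).1 (hVint j).1
          have heq : ∫ ω, V i ω * V j ω ∂μ = (∫ ω, V i ω ∂μ) * ∫ ω, V j ω ∂μ := this
          rw [heq, hmean i, zero_mul, mul_zero]
end
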